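/- arXiv:math/9805153 — 2 statements merged into one kernel-verified Lean document; each statement's English description precedes it below -/
import Mathlib

section
/- In W(g,1) with g injective, for every a ∈ ℤ and i ∈ ℤ the basis element ⟨a,i⟩ lies in the ideal generated by ⟨0,0⟩. -/
/-!
Bracketing with `E (0, 0)` multiplies `E (b, 0)` by `-g b`, which is invertible for `b ≠ 0`, so
`E (b, 0)` lies in the ideal generated by `E (0, 0)`. For general `j`, the two brackets
`⁅E (0, j), E (b, 0)⁆` and `⁅E (b, j), E (0, 0)⁆` have the same lower-order term `-j • E (b, j - 1)`,
so their difference is `2 g b • E (b, j)`. The elements `E (0, i)` are reached in the same way from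
brackets of degrees `1` and `-1`, whose lower-order terms cancel in the sum.
-/

/-- `E` satisfies the structure relations of the Lie algebra `W(g,1)`. -/
def IsWBasis {F W : Type*} [CommRing F] [LieRing W] [LieAlgebra F W] (g : ℤ →+ F)
    (E : ℤ × ℤ → W) : Prop :=
  ∀ a i b j : ℤ, ⁅E (a, i), E (b, j)⁆ =
    (g b - g a) • E (a + b, i + j) + ((j - i : ℤ) : F) • E (a + b, i + j - 1)

namespace IsWBasis

section Brackets

variable {F W : Type*} [CommRing F] [LieRing W] [LieAlgebra F W] {g : ℤ →+ F}
  {E : ℤ × ℤ → W}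

theorem lie_zero_zero (hE : IsWBasis g E) (b : ℤ) :
    ⁅E (b, 0), E (0, 0)⁆ = -g b • E (b, 0) := by
  rw [hE]
  simp

theorem lie_sub_lie_eq_smul (hE : IsWBasis g E) (b j : ℤ) :
    ⁅E (0, j), E (b, 0)⁆ - ⁅E (b, j), E (0, 0)⁆ = (2 * g b) • E (b, j) := by
  rw [hE, hE]
  simp only [zero_add, add_zero, map_zero]
  push_cast
  module

theorem lie_add_lie_eq_smul (hE : IsWBasis g E) (i : ℤ) :
    ⁅E (1, 0), E (-1, i)⁆ + ⁅E (1, i), E (-1, 0)⁆ = -(4 * g 1) • E (0, i) := by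
  rw [hE, hE]
  simp only [map_neg, add_neg_cancel, zero_add, add_zero, Int.cast_sub, Int.cast_zero]
  module

end Brackets

section Ideal

variable {F W : Type*} [Field F] [CharZero F] [LieRing W] [LieAlgebra F W] {g : ℤ →+ F}
  {E : ℤ × ℤ → W} {I : LieIdeal F W}

theorem mem_ideal_of_ne_zero (hE : IsWBasis g E) (h00 : E (0, 0) ∈ I) {b : ℤ} (hb : g b ≠ 0)
    (j : ℤ) : E (b, j) ∈ I := by
  have hb0 : E (b, 0) ∈ I :=
    (I.smul_mem_iff (neg_ne_zero.2 hb)).1 (hE.lie_zero_zero b ▸ I.lie_mem h00)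
  refine (I.smul_mem_iff (mul_ne_zero two_ne_zero hb)).1 ?_
  rw [← hE.lie_sub_lie_eq_smul]
  exact I.sub_mem (I.lie_mem hb0) (I.lie_mem h00)

theorem mem_ideal_of_fst_eq_zero (hE : IsWBasis g E) (h00 : E (0, 0) ∈ I) (h1 : g 1 ≠ 0)
    (i : ℤ) : E (0, i) ∈ I := by
  have hneg : g (-1) ≠ 0 := by simpa using h1
  refine (I.smul_mem_iff (neg_ne_zero.2 (mul_ne_zero (by norm_num : (4 : F) ≠ 0) h1))).1 ?_
  rw [← hE.lie_add_lie_eq_smul]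
  exact I.add_mem (I.lie_mem (hE.mem_ideal_of_ne_zero h00 hneg i))
    (I.lie_mem (hE.mem_ideal_of_ne_zero h00 hneg 0))

theorem mem_ideal (hE : IsWBasis g E) (hg : Function.Injective g) (h00 : E (0, 0) ∈ I)
    (a i : ℤ) : E (a, i) ∈ I := by
  have hne : ∀ {b : ℤ}, b ≠ 0 → g b ≠ 0 := (map_ne_zero_iff g hg).2
  obtain rfl | ha := eq_or_ne a 0
  · exact hE.mem_ideal_of_fst_eq_zero h00 (hne one_ne_zero) i
  · exact hE.mem_ideal_of_ne_zero h00 (hne ha) i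

end Ideal

end IsWBasis

theorem basis_mem_ideal_gen_del (F : Type*) [Field F] [CharZero F] (g : ℤ →+ F)
    (hg : Function.Injective g)
    (W : Type*) [LieRing W] [LieAlgebra F W] (E : Module.Basis (ℤ × ℤ) F W)
    (hbr : ∀ a i b j : ℤ, ⁅E (a, i), E (b, j)⁆ =
      (g b - g a) • E (a + b, i + j) + ((j - i : ℤ) : F) • E (a + b, i + j - 1))
    (a i : ℤ) :
    E (a, i) ∈ LieSubmodule.lieSpan F W ({E (0, 0)} : Set W) :=
  IsWBasis.mem_ideal hbr hg (LieSubmodule.subset_lieSpan (Set.mem_singleton _)) a i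
end

section
/- The Lie algebra W(g,1) with g injective has no nonzero ad-diagonalizable element with respect to the basis {⟨a,i⟩}: there is no nonzero l ∈ W(g,1) such that for every basis element m = ⟨a,i⟩ there exists α(m) ∈ F with [l, m] = α(m)·m. -/
/-!
Write `l = ∑ c(u,v) ⟨u,v⟩`. The `⟨u+b, v+j⟩`-coefficient of `[l, ⟨b,j⟩]` is
`c(u,v) (g b - g u) + (j - v - 1) c(u,v+1)`, and it vanishes whenever `(u,v) ≠ (0,0)`
because `[l, ⟨b,j⟩]` is a multiple of `⟨b,j⟩`. Taking `(b,j) = (u+1,v+1)` kills the second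
term and leaves `c(u,v) g(1) = 0`, so `c` vanishes off `(0,0)`; taking `(u,v) = (0,-1)` and
`(b,j) = (1,1)` then leaves `c(0,0) = 0`.
-/

section WittBasis

variable {F W : Type*} [CommRing F] [LieRing W] [LieAlgebra F W]

def IsWittBasis (g : ℤ →+ F) (E : Module.Basis (ℤ × ℤ) F W) : Prop :=
  ∀ a i b j : ℤ, ⁅E (a, i), E (b, j)⁆ =
    (g b - g a) • E (a + b, i + j) + ((j - i : ℤ) : F) • E (a + b, i + j - 1)

def IsAdDiagonal (E : Module.Basis (ℤ × ℤ) F W) (l : W) : Prop :=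
  ∀ a i : ℤ, ∃ α : F, ⁅l, E (a, i)⁆ = α • E (a, i)

variable {g : ℤ →+ F} {E : Module.Basis (ℤ × ℤ) F W}

theorem IsWittBasis.repr_lie_apply_add (hbr : IsWittBasis g E) (x : W) (u v b j : ℤ) :
    E.repr ⁅x, E (b, j)⁆ (u + b, v + j) =
      E.repr x (u, v) * (g b - g u) + ((j - v - 1 : ℤ) : F) * E.repr x (u, v + 1) := by
  have hx : x ∈ Submodule.span F (Set.range E) := E.span_eq ▸ Submodule.mem_top
  induction hx using Submodule.span_induction with
  | mem x hx =>
    obtain ⟨⟨a, i⟩, rfl⟩ := hx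
    have h₁ : (a + b, i + j) = (u + b, v + j) ↔ (a, i) = (u, v) := by
      simp only [Prod.mk.injEq]; omega
    have h₂ : (a + b, i + j - 1) = (u + b, v + j) ↔ (a, i) = (u, v + 1) := by
      simp only [Prod.mk.injEq]; omega
    simp only [hbr a i b j, map_add, map_smul, Finsupp.add_apply, Finsupp.smul_apply,
      E.repr_self, Finsupp.single_apply, h₁, h₂, smul_eq_mul]
    by_cases e₁ : (a, i) = (u, v)
    · obtain ⟨rfl, rfl⟩ := Prod.mk.inj e₁
      simp
    · by_cases e₂ : (a, i) = (u, v + 1)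
      · obtain ⟨rfl, rfl⟩ := Prod.mk.inj e₂
        simp only [e₁, if_false, if_true]
        push_cast
        ring
      · simp [e₁, e₂]
  | zero => simp
  | add x y _ _ hx hy => simp only [add_lie, map_add, Finsupp.add_apply, hx, hy]; ring
  | smul r x _ hx => simp only [smul_lie, map_smul, Finsupp.smul_apply, smul_eq_mul, hx]; ring

theorem IsWittBasis.repr_relation_of_isAdDiagonal (hbr : IsWittBasis g E) {l : W}
    (hl : IsAdDiagonal E l) {u v : ℤ} (huv : (u, v) ≠ (0, 0)) (b j : ℤ) :
    E.repr l (u, v) * (g b - g u) + ((j - v - 1 : ℤ) : F) * E.repr l (u, v + 1) = 0 := by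
  obtain ⟨α, hα⟩ := hl b j
  have hne : (b, j) ≠ (u + b, v + j) := by
    simpa [Prod.ext_iff, eq_comm] using huv
  rw [← hbr.repr_lie_apply_add, hα, map_smul, E.repr_self, Finsupp.smul_apply,
    Finsupp.single_eq_of_ne' hne, smul_zero]

theorem IsWittBasis.eq_zero_of_isAdDiagonal [NoZeroDivisors F] (hbr : IsWittBasis g E)
    (hg : g 1 ≠ 0) {l : W} (hl : IsAdDiagonal E l) : l = 0 := by
  have off_origin : ∀ u v : ℤ, (u, v) ≠ (0, 0) → E.repr l (u, v) = 0 := by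
    intro u v huv
    have h := hbr.repr_relation_of_isAdDiagonal hl huv (u + 1) (v + 1)
    rw [map_add, add_sub_cancel_left] at h
    simpa [hg] using h
  have origin : E.repr l (0, 0) = 0 := by
    have h := hbr.repr_relation_of_isAdDiagonal hl (u := 0) (v := -1) (by simp) 1 1
    simpa [off_origin 0 (-1) (by simp)] using h
  refine E.repr.injective (Finsupp.ext fun ⟨u, v⟩ => ?_)
  by_cases huv : (u, v) = (0, 0)
  · rw [huv, origin, map_zero, Finsupp.zero_apply]
  · rw [off_origin u v huv, map_zero, Finsupp.zero_apply]

end WittBasis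

theorem no_ad_diagonalizable_general (F : Type*) [Field F] (g : ℤ →+ F)
    (hg : Function.Injective g)
    (W : Type*) [LieRing W] [LieAlgebra F W] (E : Module.Basis (ℤ × ℤ) F W)
    (hbr : ∀ a i b j : ℤ, ⁅E (a, i), E (b, j)⁆ =
      (g b - g a) • E (a + b, i + j) + ((j - i : ℤ) : F) • E (a + b, i + j - 1)) :
    ¬ ∃ l : W, l ≠ 0 ∧ ∀ a i : ℤ, ∃ α : F, ⁅l, E (a, i)⁆ = α • E (a, i) := by
  rintro ⟨l, hl, hdiag⟩
  have hg₁ : g 1 ≠ 0 := fun h => one_ne_zero (hg (h.trans g.map_zero.symm))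
  exact hl (IsWittBasis.eq_zero_of_isAdDiagonal hbr hg₁ hdiag)

theorem no_ad_diagonalizable (F : Type*) [Field F] [CharZero F] (g : ℤ →+ F)
    (hg : Function.Injective g)
    (W : Type*) [LieRing W] [LieAlgebra F W] (E : Module.Basis (ℤ × ℤ) F W)
    (hbr : ∀ a i b j : ℤ, ⁅E (a, i), E (b, j)⁆ =
      (g b - g a) • E (a + b, i + j) + ((j - i : ℤ) : F) • E (a + b, i + j - 1)) :
    ¬ ∃ l : W, l ≠ 0 ∧ ∀ a i : ℤ, ∃ α : F, ⁅l, E (a, i)⁆ = α • E (a, i) :=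
  no_ad_diagonalizable_general F g hg W E hbr
end
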